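/- For every a ∈ 𝐚: dim T_a = k̄⁰_a − m_a, dim T_a⁻ = m_a⁺ − m_a, dim T_a⁺ = m_a⁻ − m_a, and dim U_a = k̄⁰_a + m_a − m_a⁻ − m_a⁺ = dim S_a. -/

import Mathlib

open MeasureTheory Set Filter

noncomputable section

namespace KnotWavelet

/-- The space `L²(J)` for `J ⊆ ℝ`. -/
abbrev L2S (J : Set ℝ) := Lp ℝ 2 (volume.restrict J)

/-- `f ∈ L²(J)` is supported (a.e.) in `I`. -/
def SuppIn (J : Set ℝ) (f : L2S J) (I : Set ℝ) : Prop :=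
  ∀ᵐ x ∂(volume.restrict J), x ∉ I → f x = 0

/-- `G_I`, the members of `G` supported in `I`. -/
def suppSet (J : Set ℝ) (G : Set (L2S J)) (I : Set ℝ) : Set (L2S J) :=
  {g ∈ G | SuppIn J g I}

/-- For a subspace `V`, the subspace of members supported in `I`. -/
def suppSub (J : Set ℝ) (V : Submodule ℝ (L2S J)) (I : Set ℝ) : Submodule ℝ (L2S J) where
  carrier := {f | f ∈ V ∧ SuppIn J f I}
  zero_mem' := ⟨V.zero_mem, by
    filter_upwards [Lp.coeFn_zero ℝ 2 (volume.restrict J)] with x hx _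
    simpa using hx⟩
  add_mem' := by
    rintro f g ⟨hfV, hf⟩ ⟨hgV, hg⟩
    refine ⟨V.add_mem hfV hgV, ?_⟩
    filter_upwards [Lp.coeFn_add f g, hf, hg] with x hx h1 h2 hxI
    rw [hx]
    simp [Pi.add_apply, h1 hxI, h2 hxI]
  smul_mem' := by
    rintro c f ⟨hfV, hf⟩
    refine ⟨V.smul_mem c hfV, ?_⟩
    filter_upwards [Lp.coeFn_smul c f, hf] with x hx h1 hxI
    rw [hx]
    simp [h1 hxI]

/-- The successor `a₊` of `a` in `ks`, as an extended real (`+∞` if there is none). -/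
def succE (ks : Set ℝ) (a : ℝ) : EReal := sInf ((fun x : ℝ => (x : EReal)) '' {b ∈ ks | a < b})

/-- The predecessor `a₋` of `a` in `ks`, as an extended real (`−∞` if there is none). -/
def predE (ks : Set ℝ) (a : ℝ) : EReal := sSup ((fun x : ℝ => (x : EReal)) '' {b ∈ ks | b < a})

/-- The successor `a₊` of `a` in `ks` as a real number (junk value if there is none). -/
def succR (ks : Set ℝ) (a : ℝ) : ℝ := sInf {b ∈ ks | a < b}

/-- The interval `[a, a₊]`. -/
def IccS (ks : Set ℝ) (a : ℝ) : Set ℝ := {x | a ≤ x ∧ (x : EReal) ≤ succE ks a}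

/-- The interval `[a₋, a₊]`. -/
def IccPS (ks : Set ℝ) (a : ℝ) : Set ℝ :=
  {x | predE ks a ≤ (x : EReal) ∧ (x : EReal) ≤ succE ks a}

/-- The interval `[a₋, a]`. -/
def IccP (ks : Set ℝ) (a : ℝ) : Set ℝ := {x | predE ks a ≤ (x : EReal) ∧ x ≤ a}

/-- The interval `(a, a₊)`. -/
def IooS (ks : Set ℝ) (a : ℝ) : Set ℝ := {x | a < x ∧ (x : EReal) < succE ks a}

/-- The interval `[a₊, ∞)` (empty if `a₊ = +∞`). -/
def IciS (ks : Set ℝ) (a : ℝ) : Set ℝ := {x | succE ks a ≤ (x : EReal)}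

/-- `ks` is a knot sequence in the interval `J`: it is a subset of `J` with at least three
elements, has no cluster (accumulation) point in `J`, and `inf ks = inf J`, `sup ks = sup J`
(as extended reals). -/
structure IsKnotSeq (J ks : Set ℝ) : Prop where
  subset : ks ⊆ J
  nontrivial : ∃ x y z : ℝ, x ∈ ks ∧ y ∈ ks ∧ z ∈ ks ∧ x ≠ y ∧ x ≠ z ∧ y ≠ z
  noCluster : ∀ x ∈ J, ¬ AccPt x (Filter.principal ks)
  inf_eq : sInf ((fun x : ℝ => (x : EReal)) '' ks) = sInf ((fun x : ℝ => (x : EReal)) '' J)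
  sup_eq : sSup ((fun x : ℝ => (x : EReal)) '' ks) = sSup ((fun x : ℝ => (x : EReal)) '' J)

/-- `a'` is the successor of `a` in `ks`. -/
def IsSucc (ks : Set ℝ) (a a' : ℝ) : Prop :=
  a ∈ ks ∧ a' ∈ ks ∧ a < a' ∧ ∀ b ∈ ks, b ≤ a ∨ a' ≤ b

/-- A collection `Φ ⊆ L²(J)` is locally finite: on each compact interval `K ⊆ J` all but
finitely many members of `Φ` vanish (a.e.) on `K`. -/
def LocFin (J : Set ℝ) (Φ : Set (L2S J)) : Prop :=
  ∀ K : Set ℝ, IsCompact K → K ⊆ J →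
    {φ ∈ Φ | ¬ ∀ᵐ x ∂(volume.restrict J), x ∈ K → φ x = 0}.Finite

/-- `Φ̆_a := Φ_{[a,a₊]}`. -/
def breveAt (J : Set ℝ) (ks : Set ℝ) (Φ : Set (L2S J)) (a : ℝ) : Set (L2S J) :=
  suppSet J Φ (IccS ks a)

open Classical in
/-- `Φ̆_{a₋}` (the empty set if `a` has no predecessor). -/
def brevePred (J : Set ℝ) (ks : Set ℝ) (Φ : Set (L2S J)) (a : ℝ) : Set (L2S J) :=
  if {b ∈ ks | b < a}.Nonempty then suppSet J Φ (IccP ks a) else ∅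

/-- `Φ_a := Φ_{[a₋,a₊]} \ Φ̆_{a₋}`. -/
def midAt (J : Set ℝ) (ks : Set ℝ) (Φ : Set (L2S J)) (a : ℝ) : Set (L2S J) :=
  suppSet J Φ (IccPS ks a) \ brevePred J ks Φ a

/-- `Φ̄_a := Φ_a \ Φ̆_a`. -/
def barAt (J : Set ℝ) (ks : Set ℝ) (Φ : Set (L2S J)) (a : ℝ) : Set (L2S J) :=
  midAt J ks Φ a \ breveAt J ks Φ a

open Classical in
/-- `Φ̄_{a₊}` (the empty set if `a` has no successor). -/
def barSucc (J : Set ℝ) (ks : Set ℝ) (Φ : Set (L2S J)) (a : ℝ) : Set (L2S J) :=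
  if {b ∈ ks | a < b}.Nonempty then barAt J ks Φ (succR ks a) else ∅

open Classical in
/-- Multiplication by the characteristic function of `I` (restriction to `I`). -/
def indL2 (J : Set ℝ) (I : Set ℝ) (f : L2S J) : L2S J :=
  if h : MeasurableSet I then ((Lp.memLp f).indicator h).toLp (I.indicator f) else 0

/-- `Φ` is a basis centered on the knot sequence `ks`. -/
def CenteredBasis (J ks : Set ℝ) (Φ : Set (L2S J)) : Prop :=
  LocFin J Φ ∧
  Φ = ⋃ a ∈ ks, midAt J ks Φ a ∧
  ∀ a ∈ ks, LinearIndependent ℝ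
    (fun φ : ↥(midAt J ks Φ a ∪ barSucc J ks Φ a) => indL2 J (IccS ks a) (φ : L2S J))

/-- `S(Φ)`: the `L²`-closure of the span of `Φ`. -/
def SClos (J : Set ℝ) (Φ : Set (L2S J)) : Submodule ℝ (L2S J) :=
  (Submodule.span ℝ Φ).topologicalClosure

/-- An orthogonal basis centered on `ks`. -/
def OrthoCenteredBasis (J ks : Set ℝ) (Φ : Set (L2S J)) : Prop :=
  CenteredBasis J ks Φ ∧ Φ.Pairwise fun f g => (inner ℝ f g : ℝ) = 0

/-- The orthogonal projection onto the closure of a subspace, as a linear map. -/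
def projL {H : Type*} [NormedAddCommGroup H] [InnerProductSpace ℝ H] [CompleteSpace H]
    (K : Submodule ℝ H) : H →ₗ[ℝ] H :=
  K.topologicalClosure.subtype ∘ₗ
    (K.topologicalClosure.orthogonalProjectionOnto : H →L[ℝ] K.topologicalClosure).toLinearMap

/-- The image `P_K U` of a subspace `U` under the orthogonal projection onto (the closure of)
`K`. -/
def projSub {H : Type*} [NormedAddCommGroup H] [InnerProductSpace ℝ H] [CompleteSpace H]
    (K U : Submodule ℝ H) : Submodule ℝ H :=
  U.map (projL K)

/-- The image `(I − P_K) U`. -/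
def oneSubProjSub {H : Type*} [NormedAddCommGroup H] [InnerProductSpace ℝ H] [CompleteSpace H]
    (K U : Submodule ℝ H) : Submodule ℝ H :=
  U.map (LinearMap.id - projL K)

/-- Two subspaces are orthogonal. -/
def PerpSub {H : Type*} [NormedAddCommGroup H] [InnerProductSpace ℝ H]
    (U V : Submodule ℝ H) : Prop :=
  ∀ f ∈ U, ∀ g ∈ V, (inner ℝ f g : ℝ) = 0

end KnotWavelet

namespace KnotWavelet

variable (J ks : Set ℝ)

open Classical in
/-- Multiplication by the characteristic function of `I`, as a linear map. -/
def indLM (I : Set ℝ) : L2S J →ₗ[ℝ] L2S J where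
  toFun := indL2 J I
  map_add' f g := by
    unfold indL2
    split_ifs with h
    · have hf := (Lp.memLp f).indicator h
      have hg := (Lp.memLp g).indicator h
      calc ((Lp.memLp (f + g)).indicator h).toLp (I.indicator ⇑(f + g))
          = (hf.add hg).toLp (I.indicator ⇑f + I.indicator ⇑g) := by
            refine MemLp.toLp_congr _ _ ?_
            filter_upwards [Lp.coeFn_add f g] with x hx
            by_cases hxI : x ∈ I
            · rw [Pi.add_apply, Set.indicator_of_mem hxI, Set.indicator_of_mem hxI,
                Set.indicator_of_mem hxI]
              exact hx
            · rw [Pi.add_apply, Set.indicator_of_notMem hxI, Set.indicator_of_notMem hxI,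
                Set.indicator_of_notMem hxI, add_zero]
        _ = hf.toLp (I.indicator ⇑f) + hg.toLp (I.indicator ⇑g) := MemLp.toLp_add hf hg
    · simp
  map_smul' c f := by
    unfold indL2
    split_ifs with h
    · have hf := (Lp.memLp f).indicator h
      calc ((Lp.memLp (c • f)).indicator h).toLp (I.indicator ⇑(c • f))
          = (hf.const_smul c).toLp (c • I.indicator ⇑f) := by
            refine MemLp.toLp_congr _ _ ?_
            filter_upwards [Lp.coeFn_smul c f] with x hx
            by_cases hxI : x ∈ I
            · rw [Pi.smul_apply, Set.indicator_of_mem hxI, Set.indicator_of_mem hxI]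
              exact hx
            · rw [Pi.smul_apply, Set.indicator_of_notMem hxI, Set.indicator_of_notMem hxI,
                smul_zero]
        _ = c • hf.toLp (I.indicator ⇑f) := MemLp.toLp_const_smul c hf
    · simp

/-- The image `χ_I · U` of a subspace under multiplication by the characteristic function of
`I`. -/
def chiMul (I : Set ℝ) (U : Submodule ℝ (L2S J)) : Submodule ℝ (L2S J) :=
  U.map (indLM J I)

/-- `V_a`, the subspace of members of `V` supported in `[a₋, a₊]`. -/
def Vmid (V : Submodule ℝ (L2S J)) (a : ℝ) : Submodule ℝ (L2S J) :=
  suppSub J V (IccPS ks a)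

/-- `V̆_a`, the subspace of members of `V` supported in `[a, a₊]`. -/
def Vbreve (V : Submodule ℝ (L2S J)) (a : ℝ) : Submodule ℝ (L2S J) :=
  suppSub J V (IccS ks a)

open Classical in
/-- `V̆_{a₋}` (the zero subspace if `a` has no predecessor in `ks`). -/
def VbrevePred (V : Submodule ℝ (L2S J)) (a : ℝ) : Submodule ℝ (L2S J) :=
  if {b ∈ ks | b < a}.Nonempty then suppSub J V (IccP ks a) else ⊥

/-- `V̄_a := (I − P_{V̆_{a₋} ⊕ V̆_a}) V_a`. -/
def Vbar (V : Submodule ℝ (L2S J)) (a : ℝ) : Submodule ℝ (L2S J) :=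
  oneSubProjSub (VbrevePred J ks V a ⊔ Vbreve J ks V a) (Vmid J ks V a)

/-- `A_a⁺ := P_{V̆¹_a} V̄⁰_a`. -/
def Aplus (V₀ V₁ : Submodule ℝ (L2S J)) (a : ℝ) : Submodule ℝ (L2S J) :=
  projSub (Vbreve J ks V₁ a) (Vbar J ks V₀ a)

/-- `A_a⁻ := P_{V̆¹_{a₋}} V̄⁰_a`. -/
def Aminus (V₀ V₁ : Submodule ℝ (L2S J)) (a : ℝ) : Submodule ℝ (L2S J) :=
  projSub (VbrevePred J ks V₁ a) (Vbar J ks V₀ a)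

/-- The wavelet space `W := V¹ ⊖ V⁰`, the orthogonal complement of `V⁰` in `V¹`. -/
def Wsp (V₀ V₁ : Submodule ℝ (L2S J)) : Submodule ℝ (L2S J) :=
  V₁ ⊓ V₀ᗮ

/-- `W̄_a := W_a ⊖ (W̆_{a₋} ⊕ W̆_a)`. -/
def Wbar (V₀ V₁ : Submodule ℝ (L2S J)) (a : ℝ) : Submodule ℝ (L2S J) :=
  Vmid J ks (Wsp J V₀ V₁) a ⊓
    (VbrevePred J ks (Wsp J V₀ V₁) a ⊔ Vbreve J ks (Wsp J V₀ V₁) a)ᗮ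

/-- `Y_a := V̄⁰_a ∩ V̄¹_a`. -/
def Ysp (V₀ V₁ : Submodule ℝ (L2S J)) (a : ℝ) : Submodule ℝ (L2S J) :=
  Vbar J ks V₀ a ⊓ Vbar J ks V₁ a

/-- `Y_a⁺ := (χ_{[a,a₊]}·V̄⁰_a) ∩ (χ_{[a,a₊]}·V̄¹_a)`. -/
def Yplus (V₀ V₁ : Submodule ℝ (L2S J)) (a : ℝ) : Submodule ℝ (L2S J) :=
  chiMul J (IccS ks a) (Vbar J ks V₀ a) ⊓ chiMul J (IccS ks a) (Vbar J ks V₁ a)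

/-- `Y_a⁻ := (χ_{[a₋,a]}·V̄⁰_a) ∩ (χ_{[a₋,a]}·V̄¹_a)`. -/
def Yminus (V₀ V₁ : Submodule ℝ (L2S J)) (a : ℝ) : Submodule ℝ (L2S J) :=
  chiMul J (IccP ks a) (Vbar J ks V₀ a) ⊓ chiMul J (IccP ks a) (Vbar J ks V₁ a)

/-- `X_a⁺ := (χ_{[a,a₊]}·V̄⁰_a) ⊖ Y_a⁺`. -/
def Xplus (V₀ V₁ : Submodule ℝ (L2S J)) (a : ℝ) : Submodule ℝ (L2S J) :=
  chiMul J (IccS ks a) (Vbar J ks V₀ a) ⊓ (Yplus J ks V₀ V₁ a)ᗮ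

/-- `X_a⁻ := (χ_{[a₋,a]}·V̄⁰_a) ⊖ Y_a⁻`. -/
def Xminus (V₀ V₁ : Submodule ℝ (L2S J)) (a : ℝ) : Submodule ℝ (L2S J) :=
  chiMul J (IccP ks a) (Vbar J ks V₀ a) ⊓ (Yminus J ks V₀ V₁ a)ᗮ

/-- `T_a := (I − P_{V̄¹_a}) V̄⁰_a`. -/
def Tsp (V₀ V₁ : Submodule ℝ (L2S J)) (a : ℝ) : Submodule ℝ (L2S J) :=
  oneSubProjSub (Vbar J ks V₁ a) (Vbar J ks V₀ a)

/-- `T_a⁻ := {f ∈ T_a : supp f ⊆ [a₋,a]}`. -/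
def Tminus (V₀ V₁ : Submodule ℝ (L2S J)) (a : ℝ) : Submodule ℝ (L2S J) :=
  suppSub J (Tsp J ks V₀ V₁ a) (IccP ks a)

/-- `T_a⁺ := {f ∈ T_a : supp f ⊆ [a,a₊]}`. -/
def Tplus (V₀ V₁ : Submodule ℝ (L2S J)) (a : ℝ) : Submodule ℝ (L2S J) :=
  suppSub J (Tsp J ks V₀ V₁ a) (IccS ks a)

/-- `U_a := T_a ⊖ (T_a⁻ ⊕ T_a⁺)`. -/
def Usp (V₀ V₁ : Submodule ℝ (L2S J)) (a : ℝ) : Submodule ℝ (L2S J) :=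
  Tsp J ks V₀ V₁ a ⊓ (Tminus J ks V₀ V₁ a ⊔ Tplus J ks V₀ V₁ a)ᗮ

/-- `S_a := (χ_{[a,a₊]} − χ_{[a₋,a]})·U_a`. -/
def Ssp (V₀ V₁ : Submodule ℝ (L2S J)) (a : ℝ) : Submodule ℝ (L2S J) :=
  (Usp J ks V₀ V₁ a).map (indLM J (IccS ks a) - indLM J (IccP ks a))

/-- `Ŵ_a := (I − P_{V̄⁰_a}) V̄¹_a`. -/
def What (V₀ V₁ : Submodule ℝ (L2S J)) (a : ℝ) : Submodule ℝ (L2S J) :=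
  oneSubProjSub (Vbar J ks V₀ a) (Vbar J ks V₁ a)

/-- `W̃_a := W̄_a ⊖ Ŵ_a`. -/
def Wtilde (V₀ V₁ : Submodule ℝ (L2S J)) (a : ℝ) : Submodule ℝ (L2S J) :=
  Wbar J ks V₀ V₁ a ⊓ (What J ks V₀ V₁ a)ᗮ

end KnotWavelet

/-! Write `A = V̄⁰_a`, `B = V̄¹_a` and `θ = I − P_B`, so that `T_a = θ A`. On `A` the kernel of `θ`
is `A ∩ B = Y_a`, whence `dim T_a = k̄⁰_a − m_a`. With `χ₊ = χ_{[a,a₊]}`, an element `θ f` of `T_a`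
is supported in `[a₋, a]` iff `χ₊ f = χ₊ h` for some `h ∈ B`, and then `θ f = f − h`: everything
in `V¹_a` supported on one side of `a` is orthogonal to `V̄¹_a`. So `T_a⁻ = θ A'` with
`A' = A ∩ χ₊⁻¹(χ₊ B)`; `χ₊` is injective on `A`, since nothing in `V̄⁰_a` lives on `[a₋, a]`
alone, it maps `A'` onto `Y_a⁺`, and `A' ∩ B = Y_a`; hence `dim T_a⁻ = m_a⁺ − m_a`, and
symmetrically for `T_a⁺`. As `T_a⁻ ⊥ T_a⁺`, `dim U_a = dim T_a − dim T_a⁻ − dim T_a⁺`, and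
`χ₊ − χ₋` is injective on functions supported in `[a₋, a₊]`, so `dim S_a = dim U_a`. All these
spaces are finite-dimensional because `Φ¹` is locally finite and orthogonal. -/

namespace KnotWavelet

open Submodule Module

section RankNullity

variable {K V W : Type*} [DivisionRing K] [AddCommGroup V] [Module K V] [AddCommGroup W]
  [Module K W]

theorem finrank_map_add_finrank_inf_ker (p : Submodule K V) [FiniteDimensional K p]
    (f : V →ₗ[K] W) : finrank K (p.map f) + finrank K ↥(p ⊓ LinearMap.ker f) = finrank K p := by
  rw [← LinearMap.range_domRestrict, ← (f.domRestrict p).finrank_range_add_finrank_ker,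
    LinearMap.ker_domRestrict, ← finrank_map_subtype_eq, map_comap_subtype]

theorem finrank_map_eq_of_disjoint_ker {p : Submodule K V} [FiniteDimensional K p]
    {f : V →ₗ[K] W} (h : p ⊓ LinearMap.ker f = ⊥) : finrank K (p.map f) = finrank K p := by
  have := finrank_map_add_finrank_inf_ker p f
  rwa [h, finrank_bot, add_zero] at this

end RankNullity

section Projection

variable {E : Type*} [NormedAddCommGroup E] [InnerProductSpace ℝ E]

theorem ker_starProjection_orthogonal (B : Submodule ℝ E) [B.HasOrthogonalProjection] :
    LinearMap.ker (Bᗮ.starProjection : E →L[ℝ] E).toLinearMap = B := by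
  ext x
  simp [orthogonal_orthogonal]

theorem finrank_inf_orthogonal_sup_add (T S₁ S₂ : Submodule ℝ E) [FiniteDimensional ℝ T]
    (h₁ : S₁ ≤ T) (h₂ : S₂ ≤ T) (h : S₁ ⟂ S₂) :
    finrank ℝ ↥(T ⊓ (S₁ ⊔ S₂)ᗮ) + finrank ℝ S₁ + finrank ℝ S₂ = finrank ℝ T := by
  have : FiniteDimensional ℝ S₁ := finiteDimensional_of_le h₁
  have : FiniteDimensional ℝ S₂ := finiteDimensional_of_le h₂
  have hsplit := finrank_add_inf_finrank_orthogonal (sup_le h₁ h₂)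
  have hsup := finrank_sup_add_finrank_inf_eq S₁ S₂
  rw [h.disjoint.eq_bot, finrank_bot, add_zero] at hsup
  rw [inf_comm]
  omega

-- The error of projecting `f` onto `span F` is orthogonal to the whole family.
theorem mem_span_of_mem_closure_of_pairwise_orthogonal {Φ F : Set E}
    (hΦ : Φ.Pairwise fun f g => (inner ℝ f g : ℝ) = 0) (hF : F ⊆ Φ) (hFfin : F.Finite) {f : E}
    (hf : f ∈ (span ℝ Φ).topologicalClosure) (hperp : ∀ φ ∈ Φ \ F, (inner ℝ φ f : ℝ) = 0) :
    f ∈ span ℝ F := by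
  have : FiniteDimensional ℝ (span ℝ F) := FiniteDimensional.span_of_finite ℝ hFfin
  set g := (span ℝ F).starProjection f
  have hg : g ∈ span ℝ F := (span ℝ F).starProjection_apply_mem f
  have hfg : f - g ∈ (span ℝ Φ).topologicalClosureᗮ := by
    rw [orthogonal_closure]
    refine isOrtho_iff_le.1 (isOrtho_span.2 ?_) (subset_span rfl)
    rintro _ rfl φ hφ
    by_cases hφF : φ ∈ F
    · exact ((span ℝ F).mem_orthogonal' _).1 ((span ℝ F).sub_starProjection_mem_orthogonal f) φ
        (subset_span hφF)
    · have hFφ : span ℝ F ⟂ span ℝ {φ} := isOrtho_span.2 fun u hu v hv => by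
        rw [Set.mem_singleton_iff] at hv
        subst hv
        exact hΦ (hF hu) hφ fun h => hφF (h ▸ hu)
      rw [inner_sub_left, real_inner_comm, hperp φ ⟨hφ, hφF⟩, hFφ.inner_eq hg (subset_span rfl),
        sub_zero]
  have hfg' : f - g ∈ (span ℝ Φ).topologicalClosure :=
    sub_mem hf ((span ℝ Φ).le_topologicalClosure (span_mono hF hg))
  rwa [sub_eq_zero.1 (disjoint_def.1 (orthogonal_disjoint _) _ hfg' hfg)]

variable [CompleteSpace E]

theorem id_sub_projL (K : Submodule ℝ E) :
    LinearMap.id - projL K = (Kᗮ.starProjection : E →L[ℝ] E).toLinearMap := by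
  ext x
  symm
  refine eq_starProjection_of_mem_of_inner_eq_zero ?_ fun w hw => ?_
  · rw [← K.orthogonal_closure]
    exact K.topologicalClosure.sub_starProjection_mem_orthogonal x
  · have hP : projL K x ∈ Kᗮᗮ := by
      rw [← K.orthogonal_closure]
      exact K.topologicalClosure.le_orthogonal_orthogonal
        (K.topologicalClosure.orthogonalProjectionOnto x).2
    simpa [real_inner_comm] using (mem_orthogonal _ _).1 hP w hw

theorem oneSubProjSub_eq_map (K U : Submodule ℝ E) :
    oneSubProjSub K U = U.map (Kᗮ.starProjection : E →L[ℝ] E).toLinearMap := by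
  rw [oneSubProjSub, id_sub_projL]

theorem oneSubProjSub_eq_inf_orthogonal {K U : Submodule ℝ E} (hKU : K ≤ U)
    (hU : IsClosed (U : Set E)) : oneSubProjSub K U = U ⊓ Kᗮ := by
  have hK : K.topologicalClosure ≤ U := K.topologicalClosure_minimal hKU hU
  ext f
  constructor
  · rintro ⟨g, hg, rfl⟩
    refine ⟨U.sub_mem hg (hK (K.topologicalClosure.orthogonalProjectionOnto g).2), ?_⟩
    rw [id_sub_projL]
    exact Kᗮ.starProjection_apply_mem g
  · rintro ⟨hfU, hfK⟩
    refine ⟨f, hfU, ?_⟩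
    rw [id_sub_projL]
    exact starProjection_eq_self_iff.2 hfK

theorem oneSubProjSub_le_sup (A B : Submodule ℝ E) [B.HasOrthogonalProjection] :
    oneSubProjSub B A ≤ A ⊔ B := by
  rw [oneSubProjSub_eq_map, Submodule.map_le_iff_le_comap]
  intro x hx
  rw [Submodule.mem_comap, ContinuousLinearMap.coe_coe, starProjection_orthogonal]
  exact sub_mem_sup hx (B.starProjection_apply_mem x)

theorem finrank_oneSubProjSub_add_finrank_inf (A B : Submodule ℝ E) [FiniteDimensional ℝ A]
    [B.HasOrthogonalProjection] :
    finrank ℝ (oneSubProjSub B A) + finrank ℝ ↥(A ⊓ B) = finrank ℝ A := by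
  have h := finrank_map_add_finrank_inf_ker A (Bᗮ.starProjection : E →L[ℝ] E).toLinearMap
  rwa [ker_starProjection_orthogonal, ← oneSubProjSub_eq_map] at h

theorem finrank_oneSubProjSub_inf_ker_add_finrank_inf (A B : Submodule ℝ E)
    [FiniteDimensional ℝ A] [B.HasOrthogonalProjection] (p : E →ₗ[ℝ] E)
    (hA : A ⊓ LinearMap.ker p = ⊥) (hAB : (A ⊔ B) ⊓ LinearMap.ker p ≤ Bᗮ) :
    finrank ℝ ↥(oneSubProjSub B A ⊓ LinearMap.ker p) + finrank ℝ ↥(A ⊓ B)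
      = finrank ℝ ↥(A.map p ⊓ B.map p) := by
  set θ := (Bᗮ.starProjection : E →L[ℝ] E).toLinearMap
  set A' := A ⊓ (B.map p).comap p
  have hθB : ∀ x, x - θ x ∈ B := fun x => by
    simp [θ, starProjection_orthogonal]
  have hA'ker : A' ⊓ LinearMap.ker p = ⊥ :=
    eq_bot_iff.2 <| (inf_le_inf_right _ inf_le_left).trans hA.le
  have hA'B : A' ⊓ B = A ⊓ B := by
    refine le_antisymm (inf_le_inf_right _ inf_le_left) fun x ⟨hxA, hxB⟩ => ?_
    exact ⟨⟨hxA, x, hxB, rfl⟩, hxB⟩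
  have hT : oneSubProjSub B A ⊓ LinearMap.ker p = A'.map θ := by
    rw [oneSubProjSub_eq_map]
    ext t
    constructor
    · rintro ⟨⟨f, hfA, rfl⟩, hpt⟩
      refine ⟨f, ⟨hfA, f - θ f, hθB f, ?_⟩, rfl⟩
      rw [map_sub, LinearMap.mem_ker.1 hpt, sub_zero]
    · rintro ⟨f, ⟨hfA, h, hhB, hph⟩, rfl⟩
      have hfh : p (f - h) = 0 := by rw [map_sub, hph, sub_self]
      have hperp : f - h ∈ Bᗮ :=
        hAB ⟨sub_mem_sup hfA hhB, LinearMap.mem_ker.2 hfh⟩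
      have hθf : θ f = f - h := by
        have hθh : θ h = 0 := by
          rw [← LinearMap.mem_ker, ker_starProjection_orthogonal]; exact hhB
        have hθfh : θ (f - h) = f - h := starProjection_eq_self_iff.2 hperp
        rwa [map_sub, hθh, sub_zero] at hθfh
      exact ⟨⟨f, hfA, rfl⟩, LinearMap.mem_ker.2 (by rw [hθf, hfh])⟩
  have hfd : FiniteDimensional ℝ A' := finiteDimensional_of_le inf_le_left
  have hrank := finrank_oneSubProjSub_add_finrank_inf A' B
  rw [oneSubProjSub_eq_map, hA'B] at hrank
  rw [hT, hrank, map_inf_eq_map_inf_comap, finrank_map_eq_of_disjoint_ker hA'ker]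

end Projection

section KnotIntervals

variable (ks : Set ℝ) (a : ℝ)

theorem predE_le_coe : predE ks a ≤ (a : EReal) :=
  sSup_le <| by
    rintro _ ⟨b, ⟨-, hb⟩, rfl⟩
    exact EReal.coe_le_coe_iff.2 hb.le

theorem coe_le_succE : (a : EReal) ≤ succE ks a :=
  le_sInf <| by
    rintro _ ⟨b, ⟨-, hb⟩, rfl⟩
    exact EReal.coe_le_coe_iff.2 hb.le

theorem IccP_union_IccS : IccP ks a ∪ IccS ks a = IccPS ks a := by
  ext x
  constructor
  · rintro (⟨h₁, h₂⟩ | ⟨h₁, h₂⟩)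
    · exact ⟨h₁, (EReal.coe_le_coe_iff.2 h₂).trans (coe_le_succE ks a)⟩
    · exact ⟨(predE_le_coe ks a).trans (EReal.coe_le_coe_iff.2 h₁), h₂⟩
  · rintro ⟨h₁, h₂⟩
    rcases le_total x a with h | h
    · exact Or.inl ⟨h₁, h⟩
    · exact Or.inr ⟨h, h₂⟩

theorem IccP_inter_IccS : IccP ks a ∩ IccS ks a = {a} := by
  ext x
  constructor
  · rintro ⟨⟨-, h₁⟩, h₂, -⟩
    exact le_antisymm h₁ h₂
  · rintro rfl
    exact ⟨⟨predE_le_coe ks x, le_rfl⟩, le_rfl, coe_le_succE ks x⟩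

theorem measurableSet_IccP : MeasurableSet (IccP ks a) :=
  (measurable_coe_real_ereal measurableSet_Ici).inter measurableSet_Iic

theorem measurableSet_IccS : MeasurableSet (IccS ks a) :=
  measurableSet_Ici.inter (measurable_coe_real_ereal measurableSet_Iic)

variable {J ks a}

theorem le_of_not_exists_pred (hks : IsKnotSeq J ks) (h : ¬{b ∈ ks | b < a}.Nonempty) {x : ℝ}
    (hx : x ∈ J) : a ≤ x := by
  have ha : (a : EReal) ≤ sInf ((fun x : ℝ => (x : EReal)) '' ks) :=
    le_sInf fun _ ⟨b, hb, hba⟩ => hba ▸ EReal.coe_le_coe_iff.2 (not_lt.1 fun h' => h ⟨b, hb, h'⟩)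
  rw [hks.inf_eq] at ha
  exact EReal.coe_le_coe_iff.1 (ha.trans (sInf_le (mem_image_of_mem _ hx)))

theorem le_of_not_exists_succ (hks : IsKnotSeq J ks) (h : ¬{b ∈ ks | a < b}.Nonempty) {x : ℝ}
    (hx : x ∈ J) : x ≤ a := by
  have ha : sSup ((fun x : ℝ => (x : EReal)) '' ks) ≤ (a : EReal) :=
    sSup_le fun _ ⟨b, hb, hba⟩ => hba ▸ EReal.coe_le_coe_iff.2 (not_lt.1 fun h' => h ⟨b, hb, h'⟩)
  rw [hks.sup_eq] at ha
  exact EReal.coe_le_coe_iff.1 ((le_sSup (mem_image_of_mem _ hx)).trans ha)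

theorem exists_inter_IccPS_subset_Icc (hks : IsKnotSeq J ks) (ha : a ∈ ks) :
    ∃ l ∈ J, ∃ u ∈ J, J ∩ IccPS ks a ⊆ Icc l u := by
  obtain ⟨l, hlJ, hl⟩ : ∃ l ∈ J, ∀ x ∈ J ∩ IccPS ks a, l ≤ x := by
    by_cases hne : {b ∈ ks | b < a}.Nonempty
    · obtain ⟨b, hb⟩ := hne
      refine ⟨b, hks.subset hb.1, fun x ⟨_, hx, _⟩ => ?_⟩
      exact EReal.coe_le_coe_iff.1 ((le_sSup (mem_image_of_mem _ hb)).trans hx)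
    · exact ⟨a, hks.subset ha, fun x hx => le_of_not_exists_pred hks hne hx.1⟩
  obtain ⟨u, huJ, hu⟩ : ∃ u ∈ J, ∀ x ∈ J ∩ IccPS ks a, x ≤ u := by
    by_cases hne : {b ∈ ks | a < b}.Nonempty
    · obtain ⟨b, hb⟩ := hne
      refine ⟨b, hks.subset hb.1, fun x ⟨_, _, hx⟩ => ?_⟩
      exact EReal.coe_le_coe_iff.1 (hx.trans (sInf_le (mem_image_of_mem _ hb)))
    · exact ⟨a, hks.subset ha, fun x hx => le_of_not_exists_succ hks hne hx.1⟩
  exact ⟨l, hlJ, u, huJ, fun x hx => ⟨hl x hx, hu x hx⟩⟩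

end KnotIntervals

section Supports

variable {J : Set ℝ} {I I' : Set ℝ}

theorem aedisjoint_IccP_IccS (ks : Set ℝ) (a : ℝ) :
    AEDisjoint (volume.restrict J) (IccP ks a) (IccS ks a) := by
  rw [AEDisjoint, IccP_inter_IccS]
  exact Measure.restrict_le_self.absolutelyContinuous Real.volume_singleton

theorem indLM_coeFn (hI : MeasurableSet I) (f : L2S J) :
    indLM J I f =ᵐ[volume.restrict J] I.indicator f := by
  change indL2 J I f =ᵐ[_] _
  rw [indL2, dif_pos hI]
  exact MemLp.coeFn_toLp _

theorem indLM_eq_zero_iff (hI : MeasurableSet I) {f : L2S J} :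
    indLM J I f = 0 ↔ SuppIn J f Iᶜ := by
  rw [Lp.eq_zero_iff_ae_eq_zero, SuppIn]
  constructor
  · intro h
    filter_upwards [indLM_coeFn hI f, h] with x hx h0 hxI
    rw [← indicator_of_mem (not_notMem.1 hxI) f, ← hx, h0, Pi.zero_apply]
  · intro h
    filter_upwards [indLM_coeFn hI f, h] with x hx h0
    rw [hx, Pi.zero_apply]
    by_cases hxI : x ∈ I
    · rw [indicator_of_mem hxI, h0 (not_not.2 hxI)]
    · exact indicator_of_notMem hxI f

theorem suppIn_iff_suppIn_compl (hII' : AEDisjoint (volume.restrict J) I I') {f : L2S J}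
    (hf : SuppIn J f (I ∪ I')) : SuppIn J f I ↔ SuppIn J f I'ᶜ := by
  constructor
  · intro hI
    filter_upwards [hI, measure_eq_zero_iff_ae_notMem.1 hII'.eq] with x hx hx' hxI'
    exact hx fun hxI => hx' ⟨hxI, not_notMem.1 hxI'⟩
  · intro hI'
    filter_upwards [hf, hI'] with x hx hx' hxI
    by_cases hxI' : x ∈ I'
    · exact hx' (not_not.2 hxI')
    · exact hx fun h => h.elim hxI hxI'

theorem inner_eq_zero_of_suppIn (hII' : AEDisjoint (volume.restrict J) I I') {f g : L2S J}
    (hf : SuppIn J f I) (hg : SuppIn J g I') : (inner ℝ f g : ℝ) = 0 := by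
  rw [L2.inner_def]
  refine integral_eq_zero_of_ae ?_
  filter_upwards [hf, hg, measure_eq_zero_iff_ae_notMem.1 hII'.eq] with x hfx hgx hx
  by_cases hxI : x ∈ I
  · simp [hgx fun hxI' => hx ⟨hxI, hxI'⟩]
  · simp [hfx hxI]

theorem eq_zero_of_indLM_sub_indLM_eq_zero (hI : MeasurableSet I) (hI' : MeasurableSet I')
    (hII' : AEDisjoint (volume.restrict J) I I') {f : L2S J} (hf : SuppIn J f (I ∪ I'))
    (h : (indLM J I' - indLM J I) f = 0) : f = 0 := by
  rw [LinearMap.sub_apply, sub_eq_zero] at h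
  rw [Lp.eq_zero_iff_ae_eq_zero]
  filter_upwards [hf, indLM_coeFn hI f, indLM_coeFn hI' f,
    measure_eq_zero_iff_ae_notMem.1 hII'.eq] with x hx hIx hI'x hxII'
  have hx' : I'.indicator f x = I.indicator f x := by rw [← hIx, ← hI'x, h]
  rw [Pi.zero_apply]
  by_cases hxI : x ∈ I
  · have hxI' : x ∉ I' := fun hxI' => hxII' ⟨hxI, hxI'⟩
    rwa [indicator_of_mem hxI, indicator_of_notMem hxI', eq_comm] at hx'
  · by_cases hxI' : x ∈ I'
    · rwa [indicator_of_mem hxI', indicator_of_notMem hxI] at hx'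
    · exact hx fun h => h.elim hxI hxI'

theorem continuous_indLM (hI : MeasurableSet I) : Continuous (indLM J I) :=
  AddMonoidHomClass.continuous_of_bound (indLM J I) 1 fun f => by
    change ‖indL2 J I f‖ ≤ 1 * ‖f‖
    rw [one_mul, indL2, dif_pos hI, Lp.norm_toLp, Lp.norm_def]
    exact ENNReal.toReal_mono (Lp.eLpNorm_ne_top f) (eLpNorm_indicator_le _)

theorem isClosed_suppSub {V : Submodule ℝ (L2S J)} (hV : IsClosed (V : Set (L2S J)))
    (hI : MeasurableSet I) : IsClosed (suppSub J V I : Set (L2S J)) := by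
  have hsupp : (suppSub J V I : Set (L2S J)) = (V : Set (L2S J)) ∩ indLM J Iᶜ ⁻¹' {0} := by
    ext f
    rw [mem_inter_iff, mem_preimage, mem_singleton_iff, indLM_eq_zero_iff hI.compl, compl_compl]
    rfl
  rw [hsupp]
  exact hV.inter (isClosed_singleton.preimage (continuous_indLM hI.compl))

end Supports

section LocalSpaces

variable {J ks : Set ℝ} {a : ℝ} {V : Submodule ℝ (L2S J)}

theorem measurableSet_IccPS : MeasurableSet (IccPS ks a) :=
  IccP_union_IccS ks a ▸ (measurableSet_IccP ks a).union (measurableSet_IccS ks a)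

theorem Vmid_mono {V' : Submodule ℝ (L2S J)} (h : V ≤ V') : Vmid J ks V a ≤ Vmid J ks V' a :=
  fun _ hf => ⟨h hf.1, hf.2⟩

theorem VbrevePred_sup_Vbreve_le_Vmid : VbrevePred J ks V a ⊔ Vbreve J ks V a ≤ Vmid J ks V a := by
  have hmono : ∀ {I}, I ⊆ IccPS ks a → suppSub J V I ≤ Vmid J ks V a := fun hI _ hf =>
    ⟨hf.1, hf.2.mono fun _ hx hxI => hx fun h => hxI (hI h)⟩
  refine sup_le ?_ (hmono (IccP_union_IccS ks a ▸ subset_union_right))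
  rw [VbrevePred]
  split_ifs
  · exact hmono (IccP_union_IccS ks a ▸ subset_union_left)
  · exact bot_le

theorem Vbar_eq_inf_orthogonal (hV : IsClosed (V : Set (L2S J))) :
    Vbar J ks V a = Vmid J ks V a ⊓ (VbrevePred J ks V a ⊔ Vbreve J ks V a)ᗮ :=
  oneSubProjSub_eq_inf_orthogonal VbrevePred_sup_Vbreve_le_Vmid
    (isClosed_suppSub hV measurableSet_IccPS)

theorem Vbar_le_Vmid (hV : IsClosed (V : Set (L2S J))) : Vbar J ks V a ≤ Vmid J ks V a :=
  (Vbar_eq_inf_orthogonal hV).trans_le inf_le_left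

theorem suppSub_IccP_eq_inf_ker {X : Submodule ℝ (L2S J)}
    (hX : ∀ f ∈ X, SuppIn J f (IccPS ks a)) :
    suppSub J X (IccP ks a) = X ⊓ LinearMap.ker (indLM J (IccS ks a)) := by
  ext f
  refine and_congr_right fun hf => ?_
  rw [SetLike.mem_coe, LinearMap.mem_ker, indLM_eq_zero_iff (measurableSet_IccS ks a)]
  exact suppIn_iff_suppIn_compl (aedisjoint_IccP_IccS ks a) (IccP_union_IccS ks a ▸ hX f hf)

theorem suppSub_IccS_eq_inf_ker {X : Submodule ℝ (L2S J)}
    (hX : ∀ f ∈ X, SuppIn J f (IccPS ks a)) :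
    suppSub J X (IccS ks a) = X ⊓ LinearMap.ker (indLM J (IccP ks a)) := by
  ext f
  refine and_congr_right fun hf => ?_
  rw [SetLike.mem_coe, LinearMap.mem_ker, indLM_eq_zero_iff (measurableSet_IccP ks a)]
  exact suppIn_iff_suppIn_compl (aedisjoint_IccP_IccS ks a).symm
    (union_comm (IccP ks a) _ ▸ IccP_union_IccS ks a ▸ hX f hf)

/-- `VbrevePred` is `⊥` at the first knot, where `[a₋, a]` meets `J` only in `{a}`. -/
theorem suppSub_IccP_le_VbrevePred (hJ : MeasurableSet J) (hks : IsKnotSeq J ks) :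
    suppSub J V (IccP ks a) ≤ VbrevePred J ks V a := by
  rw [VbrevePred]
  split_ifs with h
  · exact le_rfl
  rintro f ⟨-, hf⟩
  rw [Submodule.mem_bot, Lp.eq_zero_iff_ae_eq_zero]
  filter_upwards [hf, ae_restrict_mem hJ,
    measure_eq_zero_iff_ae_notMem.1 (aedisjoint_IccP_IccS (J := J) ks a).eq] with x hfx hxJ hx
  refine hfx fun hxP => hx ?_
  rw [IccP_inter_IccS]
  exact le_antisymm hxP.2 (le_of_not_exists_pred hks h hxJ)

theorem Vmid_inf_ker_IccS_le (hJ : MeasurableSet J) (hks : IsKnotSeq J ks) :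
    Vmid J ks V a ⊓ LinearMap.ker (indLM J (IccS ks a)) ≤
      VbrevePred J ks V a ⊔ Vbreve J ks V a := by
  rw [← suppSub_IccP_eq_inf_ker (X := Vmid J ks V a) fun _ hf => hf.2]
  have hle : suppSub J (Vmid J ks V a) (IccP ks a) ≤ suppSub J V (IccP ks a) :=
    fun _ hf => ⟨hf.1.1, hf.2⟩
  exact le_sup_of_le_left (hle.trans (suppSub_IccP_le_VbrevePred hJ hks))

theorem Vmid_inf_ker_IccP_le :
    Vmid J ks V a ⊓ LinearMap.ker (indLM J (IccP ks a)) ≤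
      VbrevePred J ks V a ⊔ Vbreve J ks V a := by
  rw [← suppSub_IccS_eq_inf_ker (X := Vmid J ks V a) fun _ hf => hf.2]
  exact le_sup_of_le_right fun _ hf => ⟨hf.1.1, hf.2⟩

theorem suppSub_IccP_isOrtho_suppSub_IccS (X Y : Submodule ℝ (L2S J)) :
    suppSub J X (IccP ks a) ⟂ suppSub J Y (IccS ks a) :=
  isOrtho_iff_inner_eq.2 fun _ hf _ hg =>
    inner_eq_zero_of_suppIn (aedisjoint_IccP_IccS ks a) hf.2 hg.2

theorem Vmid_inf_ker_indLM_sub_eq_bot :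
    Vmid J ks V a ⊓ LinearMap.ker (indLM J (IccS ks a) - indLM J (IccP ks a)) = ⊥ :=
  eq_bot_iff.2 fun _ ⟨hf, hker⟩ => eq_zero_of_indLM_sub_indLM_eq_zero (measurableSet_IccP ks a)
    (measurableSet_IccS ks a) (aedisjoint_IccP_IccS ks a) (IccP_union_IccS ks a ▸ hf.2) hker

/-- Local finiteness leaves only finitely many `φ ∈ Φ` not vanishing on a compact interval
containing `J ∩ [a₋, a₊]`; every element of `V_a` is orthogonal to all the others. -/
theorem finiteDimensional_Vmid (hJ : J.OrdConnected) (hks : IsKnotSeq J ks) (ha : a ∈ ks)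
    {Φ : Set (L2S J)} (hΦ : LocFin J Φ) (hΦo : Φ.Pairwise fun f g => (inner ℝ f g : ℝ) = 0) :
    FiniteDimensional ℝ (Vmid J ks (SClos J Φ) a) := by
  obtain ⟨l, hl, u, hu, hlu⟩ := exists_inter_IccPS_subset_Icc hks ha
  obtain ⟨F, hFΦ, hFfin, hF⟩ : ∃ F ⊆ Φ, F.Finite ∧ ∀ φ ∈ Φ \ F, SuppIn J φ (Icc l u)ᶜ :=
    ⟨_, sep_subset _ _, hΦ _ isCompact_Icc (hJ.out hl hu), fun φ ⟨hφ, hφF⟩ =>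
      (not_not.1 fun h => hφF ⟨hφ, h⟩).mono fun _ hx hxc => hx (not_notMem.1 hxc)⟩
  have hdisj : AEDisjoint (volume.restrict J) (Icc l u)ᶜ (IccPS ks a) := by
    refine measure_eq_zero_iff_ae_notMem.2 ?_
    filter_upwards [ae_restrict_mem hJ.measurableSet] with x hxJ hx
    exact hx.1 (hlu ⟨hxJ, hx.2⟩)
  have := FiniteDimensional.span_of_finite ℝ hFfin
  refine finiteDimensional_of_le (S₂ := span ℝ F) fun f hf => ?_
  exact mem_span_of_mem_closure_of_pairwise_orthogonal hΦo hFΦ hFfin hf.1 fun φ hφ =>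
    inner_eq_zero_of_suppIn hdisj (hF φ hφ) hf.2

end LocalSpaces

section TwoLevels

variable {J : Set ℝ} (ks : Set ℝ) (a : ℝ) {V₀ V₁ : Submodule ℝ (L2S J)}

theorem Vbar_le_Vmid_of_le (hV₀ : IsClosed (V₀ : Set (L2S J))) (hle : V₀ ≤ V₁) :
    Vbar J ks V₀ a ≤ Vmid J ks V₁ a :=
  (Vbar_le_Vmid hV₀).trans (Vmid_mono hle)

theorem finiteDimensional_Vbar (hV₀ : IsClosed (V₀ : Set (L2S J))) (hle : V₀ ≤ V₁)
    [FiniteDimensional ℝ (Vmid J ks V₁ a)] : FiniteDimensional ℝ (Vbar J ks V₀ a) :=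
  finiteDimensional_of_le (Vbar_le_Vmid_of_le ks a hV₀ hle)

theorem Tsp_le_Vmid (hV₀ : IsClosed (V₀ : Set (L2S J))) (hV₁ : IsClosed (V₁ : Set (L2S J)))
    (hle : V₀ ≤ V₁) [FiniteDimensional ℝ (Vmid J ks V₁ a)] :
    Tsp J ks V₀ V₁ a ≤ Vmid J ks V₁ a := by
  have := finiteDimensional_Vbar ks a hV₁ le_rfl
  exact (oneSubProjSub_le_sup _ _).trans
    (sup_le (Vbar_le_Vmid_of_le ks a hV₀ hle) (Vbar_le_Vmid hV₁))

theorem finrank_Tsp_add_finrank_Ysp (hV₀ : IsClosed (V₀ : Set (L2S J)))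
    (hV₁ : IsClosed (V₁ : Set (L2S J))) (hle : V₀ ≤ V₁) [FiniteDimensional ℝ (Vmid J ks V₁ a)] :
    finrank ℝ (Tsp J ks V₀ V₁ a) + finrank ℝ (Ysp J ks V₀ V₁ a) = finrank ℝ (Vbar J ks V₀ a) := by
  have := finiteDimensional_Vbar ks a hV₀ hle
  have := finiteDimensional_Vbar ks a hV₁ le_rfl
  exact finrank_oneSubProjSub_add_finrank_inf _ _

theorem finrank_Tsp_inf_ker_add_finrank_Ysp (hV₀ : IsClosed (V₀ : Set (L2S J)))
    (hV₁ : IsClosed (V₁ : Set (L2S J))) (hle : V₀ ≤ V₁) [FiniteDimensional ℝ (Vmid J ks V₁ a)]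
    (p : L2S J →ₗ[ℝ] L2S J)
    (hp : ∀ V, Vmid J ks V a ⊓ LinearMap.ker p ≤ VbrevePred J ks V a ⊔ Vbreve J ks V a) :
    finrank ℝ ↥(Tsp J ks V₀ V₁ a ⊓ LinearMap.ker p) + finrank ℝ (Ysp J ks V₀ V₁ a) =
      finrank ℝ ↥((Vbar J ks V₀ a).map p ⊓ (Vbar J ks V₁ a).map p) := by
  have := finiteDimensional_Vbar ks a hV₀ hle
  have := finiteDimensional_Vbar ks a hV₁ le_rfl
  refine finrank_oneSubProjSub_inf_ker_add_finrank_inf _ _ p ?_ ?_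
  · rw [Vbar_eq_inf_orthogonal hV₀]
    refine eq_bot_iff.2 fun f ⟨⟨hf, hfD⟩, hfp⟩ => ?_
    exact disjoint_def.1 (orthogonal_disjoint _) f (hp V₀ ⟨hf, hfp⟩) hfD
  · calc (Vbar J ks V₀ a ⊔ Vbar J ks V₁ a) ⊓ LinearMap.ker p
        ≤ Vmid J ks V₁ a ⊓ LinearMap.ker p :=
          inf_le_inf_right _ (sup_le (Vbar_le_Vmid_of_le ks a hV₀ hle) (Vbar_le_Vmid hV₁))
      _ ≤ (VbrevePred J ks V₁ a ⊔ Vbreve J ks V₁ a)ᗮᗮ := (hp V₁).trans (le_orthogonal_orthogonal _)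
      _ ≤ (Vbar J ks V₁ a)ᗮ := orthogonal_le ((Vbar_eq_inf_orthogonal hV₁).trans_le inf_le_right)

theorem finrank_Tminus_add_finrank_Ysp (hJ : MeasurableSet J) (hks : IsKnotSeq J ks)
    (hV₀ : IsClosed (V₀ : Set (L2S J))) (hV₁ : IsClosed (V₁ : Set (L2S J))) (hle : V₀ ≤ V₁)
    [FiniteDimensional ℝ (Vmid J ks V₁ a)] :
    finrank ℝ (Tminus J ks V₀ V₁ a) + finrank ℝ (Ysp J ks V₀ V₁ a) =
      finrank ℝ (Yplus J ks V₀ V₁ a) := by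
  rw [Tminus, suppSub_IccP_eq_inf_ker fun f hf => (Tsp_le_Vmid ks a hV₀ hV₁ hle hf).2]
  exact finrank_Tsp_inf_ker_add_finrank_Ysp ks a hV₀ hV₁ hle _ fun _ =>
    Vmid_inf_ker_IccS_le hJ hks

theorem finrank_Tplus_add_finrank_Ysp (hV₀ : IsClosed (V₀ : Set (L2S J)))
    (hV₁ : IsClosed (V₁ : Set (L2S J))) (hle : V₀ ≤ V₁) [FiniteDimensional ℝ (Vmid J ks V₁ a)] :
    finrank ℝ (Tplus J ks V₀ V₁ a) + finrank ℝ (Ysp J ks V₀ V₁ a) =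
      finrank ℝ (Yminus J ks V₀ V₁ a) := by
  rw [Tplus, suppSub_IccS_eq_inf_ker fun f hf => (Tsp_le_Vmid ks a hV₀ hV₁ hle hf).2]
  exact finrank_Tsp_inf_ker_add_finrank_Ysp ks a hV₀ hV₁ hle _ fun _ => Vmid_inf_ker_IccP_le

theorem finrank_Usp_add_finrank_Tminus_add_finrank_Tplus
    [FiniteDimensional ℝ (Tsp J ks V₀ V₁ a)] :
    finrank ℝ (Usp J ks V₀ V₁ a) + finrank ℝ (Tminus J ks V₀ V₁ a) +
      finrank ℝ (Tplus J ks V₀ V₁ a) = finrank ℝ (Tsp J ks V₀ V₁ a) :=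
  finrank_inf_orthogonal_sup_add _ _ _ (fun _ hf => hf.1) (fun _ hf => hf.1)
    (suppSub_IccP_isOrtho_suppSub_IccS _ _)

theorem finrank_Ssp_eq_finrank_Usp (hV₀ : IsClosed (V₀ : Set (L2S J)))
    (hV₁ : IsClosed (V₁ : Set (L2S J))) (hle : V₀ ≤ V₁) [FiniteDimensional ℝ (Vmid J ks V₁ a)] :
    finrank ℝ (Ssp J ks V₀ V₁ a) = finrank ℝ (Usp J ks V₀ V₁ a) := by
  have hU : Usp J ks V₀ V₁ a ≤ Vmid J ks V₁ a := inf_le_left.trans (Tsp_le_Vmid ks a hV₀ hV₁ hle)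
  have : FiniteDimensional ℝ (Usp J ks V₀ V₁ a) := finiteDimensional_of_le hU
  exact finrank_map_eq_of_disjoint_ker <| eq_bot_iff.2 <|
    (inf_le_inf_right _ hU).trans Vmid_inf_ker_indLM_sub_eq_bot.le

end TwoLevels

end KnotWavelet

open KnotWavelet in
theorem T_U_S_dimensions_general
    (J ks : Set ℝ) (hJ : J.OrdConnected) (hks : IsKnotSeq J ks)
    (Φ₀ Φ₁ : Set (L2S J))
    (h₁ : OrthoCenteredBasis J ks Φ₁)
    (V₀ V₁ : Submodule ℝ (L2S J))
    (hV₀ : V₀ = SClos J Φ₀) (hV₁ : V₁ = SClos J Φ₁) (hle : V₀ ≤ V₁) :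
    ∀ a ∈ ks,
      (Module.finrank ℝ ↥(Tsp J ks V₀ V₁ a) : ℤ) =
          (Module.finrank ℝ ↥(Vbar J ks V₀ a) : ℤ) -
            (Module.finrank ℝ ↥(Ysp J ks V₀ V₁ a) : ℤ) ∧
      (Module.finrank ℝ ↥(Tminus J ks V₀ V₁ a) : ℤ) =
          (Module.finrank ℝ ↥(Yplus J ks V₀ V₁ a) : ℤ) -
            (Module.finrank ℝ ↥(Ysp J ks V₀ V₁ a) : ℤ) ∧
      (Module.finrank ℝ ↥(Tplus J ks V₀ V₁ a) : ℤ) =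
          (Module.finrank ℝ ↥(Yminus J ks V₀ V₁ a) : ℤ) -
            (Module.finrank ℝ ↥(Ysp J ks V₀ V₁ a) : ℤ) ∧
      (Module.finrank ℝ ↥(Usp J ks V₀ V₁ a) : ℤ) =
          (Module.finrank ℝ ↥(Vbar J ks V₀ a) : ℤ) +
            (Module.finrank ℝ ↥(Ysp J ks V₀ V₁ a) : ℤ) -
            (Module.finrank ℝ ↥(Yminus J ks V₀ V₁ a) : ℤ) -
            (Module.finrank ℝ ↥(Yplus J ks V₀ V₁ a) : ℤ) ∧
      Module.finrank ℝ ↥(Usp J ks V₀ V₁ a) = Module.finrank ℝ ↥(Ssp J ks V₀ V₁ a) := by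
  intro a ha
  have hV₀c : IsClosed (V₀ : Set (L2S J)) := hV₀ ▸ Submodule.isClosed_topologicalClosure _
  have hV₁c : IsClosed (V₁ : Set (L2S J)) := hV₁ ▸ Submodule.isClosed_topologicalClosure _
  have : FiniteDimensional ℝ (Vmid J ks V₁ a) :=
    hV₁ ▸ finiteDimensional_Vmid hJ hks ha h₁.1.1 h₁.2
  have : FiniteDimensional ℝ (Tsp J ks V₀ V₁ a) :=
    Submodule.finiteDimensional_of_le (Tsp_le_Vmid ks a hV₀c hV₁c hle)
  have hT := finrank_Tsp_add_finrank_Ysp ks a hV₀c hV₁c hle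
  have hTminus := finrank_Tminus_add_finrank_Ysp ks a hJ.measurableSet hks hV₀c hV₁c hle
  have hTplus := finrank_Tplus_add_finrank_Ysp ks a hV₀c hV₁c hle
  have hU := finrank_Usp_add_finrank_Tminus_add_finrank_Tplus ks a (V₀ := V₀) (V₁ := V₁)
  have hS := finrank_Ssp_eq_finrank_Usp ks a hV₀c hV₁c hle
  exact ⟨by omega, by omega, by omega, by omega, by omega⟩

open KnotWavelet in
theorem T_U_S_dimensions
    (J ks : Set ℝ) (hJ : J.OrdConnected) (hks : IsKnotSeq J ks)
    (Φ₀ Φ₁ : Set (L2S J))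
    (h₀ : OrthoCenteredBasis J ks Φ₀) (h₁ : OrthoCenteredBasis J ks Φ₁)
    (V₀ V₁ : Submodule ℝ (L2S J))
    (hV₀ : V₀ = SClos J Φ₀) (hV₁ : V₁ = SClos J Φ₁) (hle : V₀ ≤ V₁) :
    ∀ a ∈ ks,
      (Module.finrank ℝ ↥(Tsp J ks V₀ V₁ a) : ℤ) =
          (Module.finrank ℝ ↥(Vbar J ks V₀ a) : ℤ) -
            (Module.finrank ℝ ↥(Ysp J ks V₀ V₁ a) : ℤ) ∧
      (Module.finrank ℝ ↥(Tminus J ks V₀ V₁ a) : ℤ) =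
          (Module.finrank ℝ ↥(Yplus J ks V₀ V₁ a) : ℤ) -
            (Module.finrank ℝ ↥(Ysp J ks V₀ V₁ a) : ℤ) ∧
      (Module.finrank ℝ ↥(Tplus J ks V₀ V₁ a) : ℤ) =
          (Module.finrank ℝ ↥(Yminus J ks V₀ V₁ a) : ℤ) -
            (Module.finrank ℝ ↥(Ysp J ks V₀ V₁ a) : ℤ) ∧
      (Module.finrank ℝ ↥(Usp J ks V₀ V₁ a) : ℤ) =
          (Module.finrank ℝ ↥(Vbar J ks V₀ a) : ℤ) +
            (Module.finrank ℝ ↥(Ysp J ks V₀ V₁ a) : ℤ) -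
            (Module.finrank ℝ ↥(Yminus J ks V₀ V₁ a) : ℤ) -
            (Module.finrank ℝ ↥(Yplus J ks V₀ V₁ a) : ℤ) ∧
      Module.finrank ℝ ↥(Usp J ks V₀ V₁ a) = Module.finrank ℝ ↥(Ssp J ks V₀ V₁ a) :=
  T_U_S_dimensions_general J ks hJ hks Φ₀ Φ₁ h₁ V₀ V₁ hV₀ hV₁ hle
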